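/- arXiv:2410.15538 — 3 statements merged into one kernel-verified Lean document; each statement's English description precedes it below -/
import Mathlib

section
/- Let F be a field of characteristic ≠ 2 and n ≥ 2. The matrices B_{n,1}, B_{n,2}, …, B_{n,n−1} (where B_{n,l} has entries 1 in positions (n,1),…,(n,l) and 0 elsewhere) represent pairwise non-isomorphic algebras A(B_{n,l}) under degree-preserving isomorphisms; consequently, there are at least n − 1 isomorphism classes of algebras A(T) for T ranging over strictly lower triangular n×n matrices over F. -/
open scoped BigOperators

noncomputable section

variable {F : Type} [Field F]

/-- `T` is strictly lower triangular. -/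
def SLT {n : ℕ} (T : Matrix (Fin n) (Fin n) F) : Prop :=
  ∀ i j : Fin n, i ≤ j → T i j = 0

/-- The ideal of relations defining the nil graded algebra `A(T)`:
`X i ^ 2 = ∑ j < i, T i j * X j * X i` (for `i = 0` the sum is empty, giving `X 0 ^ 2 = 0`). -/
def ntIdeal {n : ℕ} (T : Matrix (Fin n) (Fin n) F) : Ideal (MvPolynomial (Fin n) F) :=
  Ideal.span {p | ∃ i : Fin n,
    p = MvPolynomial.X i ^ 2 -
      ∑ j ∈ Finset.univ.filter (fun j => j < i),
        MvPolynomial.C (T i j) * MvPolynomial.X j * MvPolynomial.X i}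

/-- The nil graded algebra `A(T)` associated to the strictly lower triangular matrix `T`. -/
abbrev NTAlg {n : ℕ} (T : Matrix (Fin n) (Fin n) F) : Type :=
  MvPolynomial (Fin n) F ⧸ ntIdeal T

/-- The generator `X i` of `A(T)`. -/
def ntGen {n : ℕ} (T : Matrix (Fin n) (Fin n) F) (i : Fin n) : NTAlg T :=
  Ideal.Quotient.mk (ntIdeal T) (MvPolynomial.X i)

/-- There is a degree-preserving isomorphism `A(T) → A(S)`, i.e. an algebra isomorphism
sending each generator to an `F`-linear combination of the generators of the target. -/
def NTIso {n : ℕ} (T S : Matrix (Fin n) (Fin n) F) : Prop :=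
  ∃ e : NTAlg T ≃ₐ[F] NTAlg S, ∃ Γ : Matrix (Fin n) (Fin n) F,
    ∀ j : Fin n, e (ntGen T j) = ∑ i : Fin n, Γ i j • ntGen S i

/-- The matrix `B_{n,l}`: entries `1` in positions `(n, 1), …, (n, l)` (1-based), `0` elsewhere. -/
def Bnl (n l : ℕ) : Matrix (Fin n) (Fin n) F :=
  fun i j => if i.val = n - 1 ∧ j.val < l then (1 : F) else 0


/-!
A degree-preserving isomorphism `A(T) ≅ A(S)` with matrix `Γ` carries every defining quadratic
relation of `A(T)` to a linear combination of those of `A(S)`, because the relation ideal is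
generated in degree 2 (so it also contains no linear forms, and `Γ` is invertible).

For `T = B_{n,l}`, `S = B_{n,m}` with `1 ≤ l < m < n`, the relations `x_j² = 0` (`j < n`) say
that the square of the `j`-th column of `Γ` lies in the relation space of `B_{n,m}`. As `m ≥ 2`
and `char F ≠ 2`, this forces the column to be a multiple of a single `y_i` with `i < n`. Hence
`Γ_{nn} ≠ 0`, and `w = ∑_{k ≤ l} Γ e_k` has at most `l < m` nonzero entries, so it vanishes at
some `p ≤ m`. Comparing the coefficients of `y_p y_n`, `y_q y_n` and `y_p y_q` (another `q ≤ m`)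
in the image `u (u - w)` of the last relation, `u` the last column of `Γ`, gives `Γ_{nn} = 0`.
-/

open scoped Matrix

theorem exists_mem_sum_eq_zero_of_card_lt {ι κ R : Type*} [Semiring R] [NoZeroDivisors R]
    {K : Finset κ} {P : Finset ι} (hKP : K.card < P.card) {γ : ι → κ → R}
    (hγ : ∀ k ∈ K, ∀ p q, p ≠ q → γ p k * γ q k = 0) : ∃ p ∈ P, ∑ k ∈ K, γ p k = 0 := by
  by_contra! h
  refine (Finset.card_le_card_of_forall_subsingleton (fun p k => γ p k ≠ 0)
    (fun p hp => ?_) (fun k hk p hp q hq => ?_)).not_gt hKP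
  · exact Finset.exists_ne_zero_of_sum_ne_zero (h p hp)
  · by_contra hpq
    exact mul_ne_zero hp.2 hq.2 (hγ k hk p q hpq)

theorem exists_val_lt_mulVec_eq_zero {R : Type*} [Semiring R] [NoZeroDivisors R] {N M l m : ℕ}
    {Γ : Matrix (Fin N) (Fin M) R} (hlm : l < m) (hm : m ≤ N)
    (hΓ : ∀ k : Fin M, k.val < l → ∀ p q, p ≠ q → Γ p k * Γ q k = 0) :
    ∃ p : Fin N, p.val < m ∧ (Γ *ᵥ fun k => if k.val < l then 1 else 0) p = 0 := by
  obtain ⟨p, hp, hwp⟩ := exists_mem_sum_eq_zero_of_card_lt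
    (K := Finset.univ.filter (fun k : Fin M => k.val < l))
    (P := Finset.univ.filter (fun k : Fin N => k.val < m))
    (by simp only [Fin.card_filter_val_lt]; omega)
    (fun k hk => hΓ k (by simpa using hk))
  refine ⟨p, by simpa using hp, ?_⟩
  simpa [Matrix.mulVec, dotProduct, Finset.sum_filter] using hwp

namespace MvPolynomial

section HomogeneousIdeal

variable {σ R : Type*} [CommRing R] {d : ℕ} {g : MvPolynomial σ R}

theorem homogeneousComponent_mul_of_isHomogeneous (hg : g.IsHomogeneous d)
    (f : MvPolynomial σ R) (k : ℕ) :
    homogeneousComponent k (f * g) =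
      ∑ i ∈ Finset.range (f.totalDegree + 1),
        if k = i + d then homogeneousComponent i f * g else 0 := by
  conv_lhs => rw [← sum_homogeneousComponent f, Finset.sum_mul, map_sum]
  refine Finset.sum_congr rfl fun i _ => ?_
  exact homogeneousComponent_of_mem ((homogeneousComponent_isHomogeneous i f).mul hg)

theorem homogeneousComponent_mul_of_lt (hg : g.IsHomogeneous d) (f : MvPolynomial σ R)
    {k : ℕ} (hk : k < d) : homogeneousComponent k (f * g) = 0 := by
  rw [homogeneousComponent_mul_of_isHomogeneous hg]
  exact Finset.sum_eq_zero fun i _ => if_neg (by omega)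

theorem homogeneousComponent_mul_of_isHomogeneous_self (hg : g.IsHomogeneous d)
    (f : MvPolynomial σ R) : homogeneousComponent d (f * g) = C (coeff 0 f) * g := by
  rw [homogeneousComponent_mul_of_isHomogeneous hg, Finset.sum_eq_single 0,
    if_pos (zero_add d).symm, homogeneousComponent_zero]
  · exact fun i _ hi => if_neg (by omega)
  · simp

theorem homogeneousComponent_of_mem_span {G : Set (MvPolynomial σ R)}
    (hG : ∀ g ∈ G, g.IsHomogeneous d) {p : MvPolynomial σ R} (hp : p ∈ Ideal.span G) :
    (∀ k < d, homogeneousComponent k p = 0) ∧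
      homogeneousComponent d p ∈ Submodule.span R G := by
  suffices ∀ f, (∀ k < d, homogeneousComponent k (f * p) = 0) ∧
      homogeneousComponent d (f * p) ∈ Submodule.span R G by simpa using this 1
  induction hp using Submodule.span_induction with
  | mem g hg =>
    intro f
    refine ⟨fun k hk => homogeneousComponent_mul_of_lt (hG g hg) f hk, ?_⟩
    rw [homogeneousComponent_mul_of_isHomogeneous_self (hG g hg), ← smul_eq_C_mul]
    exact Submodule.smul_mem _ _ (Submodule.subset_span hg)
  | zero => simp
  | add x y _ _ hx hy =>
    intro f
    simp only [mul_add, map_add]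
    exact ⟨fun k hk => by rw [(hx f).1 k hk, (hy f).1 k hk, add_zero],
      Submodule.add_mem _ (hx f).2 (hy f).2⟩
  | smul r x _ hx =>
    intro f
    simpa only [smul_eq_mul, ← mul_assoc] using hx (f * r)

end HomogeneousIdeal

section LinearForms

variable {σ R : Type*} [Fintype σ] [CommRing R]

def linForm : (σ → R) →ₗ[R] MvPolynomial σ R := Fintype.linearCombination R X

theorem linForm_apply (a : σ → R) : linForm a = ∑ i, a i • X i :=
  Fintype.linearCombination_apply _ _ _

theorem linForm_single [DecidableEq σ] (i : σ) : linForm (Pi.single i (1 : R)) = X i := by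
  simp [linForm]

theorem isHomogeneous_linForm (a : σ → R) : (linForm a).IsHomogeneous 1 := by
  rw [← mem_homogeneousSubmodule, linForm_apply]
  exact Submodule.sum_mem _ fun i _ =>
    Submodule.smul_mem _ _ ((mem_homogeneousSubmodule _ _).2 (isHomogeneous_X R i))

theorem coeff_single_linForm (a : σ → R) (p : σ) :
    coeff (Finsupp.single p 1) (linForm a) = a p := by
  classical
  simp [linForm_apply, coeff_sum, coeff_X, Finsupp.single_left_inj one_ne_zero]

def quadCoeff (p q : σ) : MvPolynomial σ R →ₗ[R] R :=
  lcoeff R (Finsupp.single p 1 + Finsupp.single q 1)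

theorem quadCoeff_linForm_mul_linForm [DecidableEq σ] (a b : σ → R) (p q : σ) :
    quadCoeff p q (linForm a * linForm b) =
      if p = q then a p * b p else a p * b q + a q * b p := by
  have key : ∀ i j : σ, quadCoeff p q (X i * X j : MvPolynomial σ R) =
      if (i = p ∧ j = q) ∨ (i = q ∧ j = p) then 1 else 0 := by
    intro i j
    rw [quadCoeff, lcoeff_apply, X, X, monomial_mul, one_mul, coeff_monomial]
    simp [Finsupp.single_add_single_eq_single_add_single one_ne_zero one_ne_zero]
  simp only [linForm_apply, Finset.sum_mul_sum, smul_mul_smul, map_sum, map_smul, key]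
  split_ifs with hpq
  · subst hpq
    simp [ite_and]
  · have hsplit : ∀ i j : σ, (if (i = p ∧ j = q) ∨ (i = q ∧ j = p) then (1 : R) else 0) =
        (if i = p ∧ j = q then 1 else 0) + (if i = q ∧ j = p then 1 else 0) := by
      intro i j
      by_cases h₁ : i = p ∧ j = q
      · rw [if_pos (Or.inl h₁), if_pos h₁, if_neg (fun h => hpq (h₁.1 ▸ h.1))]; simp
      · simp only [h₁, false_or, if_false, zero_add]
    simp [hsplit, mul_add, Finset.sum_add_distrib, ite_and]

end LinearForms

end MvPolynomial

open MvPolynomial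

namespace NTAlg

variable {n : ℕ}

def relVec (T : Matrix (Fin n) (Fin n) F) (i : Fin n) : Fin n → F :=
  Pi.single i 1 - fun k => if k < i then T i k else 0

def ntRel (T : Matrix (Fin n) (Fin n) F) (i : Fin n) : MvPolynomial (Fin n) F :=
  X i * linForm (relVec T i)

theorem ntIdeal_eq_span_ntRel (T : Matrix (Fin n) (Fin n) F) :
    ntIdeal T = Ideal.span (Set.range (ntRel T)) := by
  suffices ∀ i, ntRel T i = X i ^ 2 - ∑ j ∈ Finset.univ.filter (fun j => j < i),
      C (T i j) * X j * X i by
    unfold ntIdeal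
    congr 1
    ext p
    simp only [Set.mem_ofPred_eq, Set.mem_range, this, eq_comm]
  intro i
  rw [ntRel, relVec, map_sub, linForm_single, linForm_apply, Finset.sum_filter, mul_sub,
    Finset.mul_sum, pow_two]
  congr 1
  refine Finset.sum_congr rfl fun j _ => ?_
  split_ifs
  · rw [smul_eq_C_mul]; ring
  · simp

theorem isHomogeneous_ntRel (T : Matrix (Fin n) (Fin n) F) (i : Fin n) :
    (ntRel T i).IsHomogeneous 2 :=
  (isHomogeneous_X F i).mul (isHomogeneous_linForm _)

theorem mk_linForm (T : Matrix (Fin n) (Fin n) F) (a : Fin n → F) :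
    Ideal.Quotient.mk (ntIdeal T) (linForm a) = ∑ i, a i • ntGen T i := by
  rw [linForm_apply, map_sum]
  exact Finset.sum_congr rfl fun i _ => map_smul (Ideal.Quotient.mkₐ F (ntIdeal T)) (a i) (X i)

theorem eq_zero_of_linForm_mem {T : Matrix (Fin n) (Fin n) F} {a : Fin n → F}
    (ha : linForm a ∈ ntIdeal T) : a = 0 := by
  rw [ntIdeal_eq_span_ntRel] at ha
  have h := (homogeneousComponent_of_mem_span (by
    rintro _ ⟨i, rfl⟩; exact isHomogeneous_ntRel T i) ha).1 1 one_lt_two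
  rw [homogeneousComponent_eq_self (isHomogeneous_linForm a)] at h
  funext p
  simpa [coeff_single_linForm] using congrArg (coeff (Finsupp.single p 1)) h

theorem ntRel_mem_ntIdeal (T : Matrix (Fin n) (Fin n) F) (i : Fin n) : ntRel T i ∈ ntIdeal T := by
  rw [ntIdeal_eq_span_ntRel]
  exact Ideal.subset_span ⟨i, rfl⟩


section Isomorphism

variable {T S : Matrix (Fin n) (Fin n) F} {e : NTAlg T ≃ₐ[F] NTAlg S}
  {Γ : Matrix (Fin n) (Fin n) F}

theorem map_mk_linForm (hΓ : ∀ j, e (ntGen T j) = ∑ i, Γ i j • ntGen S i) (a : Fin n → F) :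
    e (Ideal.Quotient.mk _ (linForm a)) = Ideal.Quotient.mk _ (linForm (Γ *ᵥ a)) := by
  simp only [mk_linForm, map_sum, map_smul, hΓ, Finset.smul_sum, smul_smul]
  rw [Finset.sum_comm]
  refine Finset.sum_congr rfl fun i _ => ?_
  rw [← Finset.sum_smul, Matrix.mulVec, dotProduct]
  simp_rw [mul_comm]

theorem isUnit_of_ntIso (hΓ : ∀ j, e (ntGen T j) = ∑ i, Γ i j • ntGen S i) : IsUnit Γ := by
  refine Matrix.mulVec_injective_iff_isUnit.1 fun a b hab => sub_eq_zero.1 ?_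
  refine eq_zero_of_linForm_mem (Ideal.Quotient.eq_zero_iff_mem.1 (e.injective ?_))
  rw [map_mk_linForm hΓ, Matrix.mulVec_sub, hab, sub_self, map_zero, map_zero, map_zero]

theorem ntIso_symm (h : NTIso T S) : NTIso S T := by
  obtain ⟨e, Γ, hΓ⟩ := h
  have hΓΓ : Γ * Γ⁻¹ = 1 := Matrix.mul_nonsing_inv Γ
    ((Matrix.isUnit_iff_isUnit_det Γ).1 (isUnit_of_ntIso hΓ))
  refine ⟨e.symm, Γ⁻¹, fun j => e.injective ?_⟩
  have hcol : (fun i => Γ⁻¹ i j) = Γ⁻¹ *ᵥ Pi.single j 1 := (Matrix.mulVec_single_one _ _).symm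
  rw [e.apply_symm_apply, ← mk_linForm, map_mk_linForm hΓ, hcol, Matrix.mulVec_mulVec, hΓΓ,
    Matrix.one_mulVec, linForm_single, ntGen]

theorem linForm_mul_linForm_mem_span (hΓ : ∀ j, e (ntGen T j) = ∑ i, Γ i j • ntGen S i)
    {a b : Fin n → F} (hab : linForm a * linForm b ∈ ntIdeal T) :
    linForm (Γ *ᵥ a) * linForm (Γ *ᵥ b) ∈ Submodule.span F (Set.range (ntRel S)) := by
  have hmem : linForm (Γ *ᵥ a) * linForm (Γ *ᵥ b) ∈ ntIdeal S := by
    rw [← Ideal.Quotient.eq_zero_iff_mem, map_mul, ← map_mk_linForm hΓ, ← map_mk_linForm hΓ,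
      ← map_mul, ← map_mul, Ideal.Quotient.eq_zero_iff_mem.2 hab, map_zero]
  rw [ntIdeal_eq_span_ntRel] at hmem
  have h := (homogeneousComponent_of_mem_span (by
    rintro _ ⟨i, rfl⟩; exact isHomogeneous_ntRel S i) hmem).2
  rwa [homogeneousComponent_eq_self ((isHomogeneous_linForm _).mul (isHomogeneous_linForm _))]
    at h

end Isomorphism

section Bnl

variable {n l m : ℕ}

local notation "last" => Fin.last n

theorem ne_last_of_val_lt {k : Fin (n + 1)} (hk : k.val < n) : k ≠ last :=
  Fin.lt_last_iff_ne_last.1 (Fin.lt_def.2 hk)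

theorem Bnl_succ_apply (i j : Fin (n + 1)) :
    (Bnl (n + 1) l : Matrix (Fin (n + 1)) (Fin (n + 1)) F) i j =
      if i = last ∧ j.val < l then 1 else 0 := by
  simp [Bnl, Fin.ext_iff]

theorem relVec_Bnl_of_ne_last {i : Fin (n + 1)} (hi : i ≠ last) :
    relVec (Bnl (n + 1) l : Matrix (Fin (n + 1)) (Fin (n + 1)) F) i = Pi.single i 1 := by
  ext k
  simp [relVec, Bnl_succ_apply, hi]

theorem relVec_Bnl_last (hl : l ≤ n) :
    relVec (Bnl (n + 1) l : Matrix (Fin (n + 1)) (Fin (n + 1)) F) last =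
      Pi.single last 1 - fun k => if k.val < l then 1 else 0 := by
  ext k
  simp only [relVec, Bnl_succ_apply, true_and, Pi.sub_apply]
  congr 1
  by_cases hk : k.val < l
  · simp [hk, Fin.lt_def]; omega
  · simp [hk]

theorem quadCoeff_of_mem_span_ntRel_Bnl (hm : m ≤ n) {f : MvPolynomial (Fin (n + 1)) F}
    (hf : f ∈ Submodule.span F (Set.range (ntRel (Bnl (n + 1) m)))) :
    (∀ p q, p ≠ q → p ≠ last → q ≠ last → quadCoeff p q f = 0) ∧
      ∀ p ≠ last, quadCoeff p last f = -(if p.val < m then 1 else 0) * quadCoeff last last f := by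
  induction hf using Submodule.span_induction with
  | mem g hg =>
    obtain ⟨i, rfl⟩ := hg
    have hlast : ¬ n < m := by omega
    rw [ntRel, ← linForm_single]
    by_cases hi : i = last
    · subst hi
      rw [relVec_Bnl_last hm]
      refine ⟨fun p q hpq hp hq => ?_, fun p hp => ?_⟩ <;>
        simp only [quadCoeff_linForm_mul_linForm] <;> simp [*]
    · refine ⟨fun p q hpq hp hq => ?_, fun p hp => ?_⟩
      · rw [quadCoeff_linForm_mul_linForm, if_neg hpq, relVec_Bnl_of_ne_last hi]
        rcases eq_or_ne p i with rfl | hpi <;> simp [Pi.single_apply, *, Ne.symm hpq]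
      · simp [quadCoeff_linForm_mul_linForm, relVec_Bnl_of_ne_last hi, Pi.single_apply, hp,
          Ne.symm hi]
  | zero => simp
  | add x y _ _ hx hy =>
    refine ⟨fun p q hpq hp hq => ?_, fun p hp => ?_⟩
    · rw [map_add, hx.1 p q hpq hp hq, hy.1 p q hpq hp hq, add_zero]
    · rw [map_add, map_add, hx.2 p hp, hy.2 p hp, mul_add]
  | smul r x _ hx =>
    refine ⟨fun p q hpq hp hq => ?_, fun p hp => ?_⟩
    · rw [map_smul, hx.1 p q hpq hp hq, smul_zero]
    · rw [map_smul, map_smul, hx.2 p hp, smul_eq_mul, smul_eq_mul]; ring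


theorem apply_last_eq_zero_of_sq_mem_span (hm₂ : 2 ≤ m) (hm : m ≤ n) {a : Fin (n + 1) → F}
    (ha : linForm a * linForm a ∈ Submodule.span F (Set.range (ntRel (Bnl (n + 1) m)))) :
    a last = 0 := by
  obtain ⟨hoff, hlast⟩ := quadCoeff_of_mem_span_ntRel_Bnl hm ha
  let i₀ : Fin (n + 1) := ⟨0, by omega⟩
  let i₁ : Fin (n + 1) := ⟨1, by omega⟩
  have hne : i₀ ≠ i₁ := by simp [i₀, i₁, Fin.ext_iff]
  have hi₀ : i₀ ≠ last := ne_last_of_val_lt (by simp [i₀]; omega)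
  have hi₁ : i₁ ≠ last := ne_last_of_val_lt (by simp [i₁]; omega)
  have h01 := hoff i₀ i₁ hne hi₀ hi₁
  have h0 := hlast i₀ hi₀
  have h1 := hlast i₁ hi₁
  simp only [quadCoeff_linForm_mul_linForm, if_neg hne, if_neg hi₀, if_neg hi₁, if_true,
    if_pos (show (i₀ : ℕ) < m by simp [i₀]; omega),
    if_pos (show (i₁ : ℕ) < m by simp [i₁]; omega)] at h01 h0 h1
  -- `2 a i a last = - a last ^ 2` for `i = 0, 1`, while `a 0 * a 1 = 0`
  have : a last ^ 4 = 0 := by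
    linear_combination a last ^ 2 * h1 - 2 * a i₁ * a last * h0 + 2 * a last ^ 2 * h01
  exact pow_eq_zero_iff (by norm_num) |>.1 this

theorem mul_eq_zero_of_sq_mem_span (h2 : (2 : F) ≠ 0) (hm₂ : 2 ≤ m) (hm : m ≤ n)
    {a : Fin (n + 1) → F}
    (ha : linForm a * linForm a ∈ Submodule.span F (Set.range (ntRel (Bnl (n + 1) m))))
    {p q : Fin (n + 1)} (hpq : p ≠ q) : a p * a q = 0 := by
  have hlast := apply_last_eq_zero_of_sq_mem_span hm₂ hm ha
  rcases eq_or_ne p last with rfl | hp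
  · rw [hlast, zero_mul]
  rcases eq_or_ne q last with rfl | hq
  · rw [hlast, mul_zero]
  have h := (quadCoeff_of_mem_span_ntRel_Bnl hm ha).1 p q hpq hp hq
  rw [quadCoeff_linForm_mul_linForm, if_neg hpq, mul_comm (a q), ← two_mul] at h
  exact (mul_eq_zero.1 h).resolve_left h2

theorem apply_last_eq_zero_of_mul_mem_span (hm : m ≤ n) {u w : Fin (n + 1) → F}
    (hw : w last = 0) {p q : Fin (n + 1)} (hpq : p ≠ q) (hp : p.val < m) (hq : q.val < m)
    (hwp : w p = 0)
    (h : linForm u * linForm (u - w) ∈ Submodule.span F (Set.range (ntRel (Bnl (n + 1) m)))) :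
    u last = 0 := by
  have hp' : p ≠ last := ne_last_of_val_lt (by omega)
  have hq' : q ≠ last := ne_last_of_val_lt (by omega)
  obtain ⟨hoff, hlast⟩ := quadCoeff_of_mem_span_ntRel_Bnl hm h
  have hcross := hoff p q hpq hp' hq'
  have hpl := hlast p hp'
  have hql := hlast q hq'
  simp only [quadCoeff_linForm_mul_linForm, if_neg hpq, if_neg hp', if_neg hq', if_true,
    if_pos hp, if_pos hq, Pi.sub_apply, hw, hwp, sub_zero] at hcross hpl hql
  have : u last ^ 3 = 0 := by
    linear_combination u last * hpl - 2 * u p * hql + 2 * u last * hcross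
  exact pow_eq_zero_iff (by norm_num) |>.1 this

theorem not_ntIso_Bnl (h2 : (2 : F) ≠ 0) (hl : 1 ≤ l) (hlm : l < m) (hm : m ≤ n) :
    ¬ NTIso (Bnl (n + 1) l : Matrix (Fin (n + 1)) (Fin (n + 1)) F) (Bnl (n + 1) m) := by
  rintro ⟨e, Γ, hΓ⟩
  have hrel (j : Fin (n + 1)) :
      linForm (Γ *ᵥ Pi.single j 1) * linForm (Γ *ᵥ relVec (Bnl (n + 1) l) j) ∈
        Submodule.span F (Set.range (ntRel (Bnl (n + 1) m))) :=
    linForm_mul_linForm_mem_span hΓ (by rw [linForm_single]; exact ntRel_mem_ntIdeal _ j)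
  have hcol : ∀ j ≠ last, Γ last j = 0 ∧ ∀ p q, p ≠ q → Γ p j * Γ q j = 0 := by
    intro j hj
    have h := hrel j
    rw [relVec_Bnl_of_ne_last hj, Matrix.mulVec_single_one] at h
    exact ⟨apply_last_eq_zero_of_sq_mem_span (by omega) hm h,
      fun p q hpq => mul_eq_zero_of_sq_mem_span h2 (by omega) hm h hpq⟩
  have hΓll : Γ last last ≠ 0 := by
    intro h0
    refine ((Matrix.isUnit_iff_isUnit_det Γ).1 (isUnit_of_ntIso hΓ)).ne_zero ?_
    refine Matrix.det_eq_zero_of_row_eq_zero last fun j => ?_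
    rcases eq_or_ne j last with rfl | hj
    exacts [h0, (hcol j hj).1]
  obtain ⟨p, hp, hwp⟩ := exists_val_lt_mulVec_eq_zero hlm (by omega)
    fun k hk => (hcol k (ne_last_of_val_lt (by omega))).2
  obtain ⟨q, hq, hqp⟩ := Finset.exists_mem_ne
    (s := Finset.univ.filter (fun k : Fin (n + 1) => k.val < m))
    (by simp only [Fin.card_filter_val_lt]; omega) p
  have hwlast : (Γ *ᵥ fun k => if k.val < l then 1 else 0) last = 0 := by
    simp only [Matrix.mulVec, dotProduct, mul_ite, mul_one, mul_zero]
    refine Finset.sum_eq_zero fun k _ => ?_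
    split_ifs with hk
    exacts [(hcol k (ne_last_of_val_lt (by omega))).1, rfl]
  have hlast := hrel last
  rw [relVec_Bnl_last (by omega), Matrix.mulVec_sub, Matrix.mulVec_single_one] at hlast
  exact hΓll (apply_last_eq_zero_of_mul_mem_span (u := Γ.col last) hm hwlast (Ne.symm hqp) hp
    (by simpa using hq) hwp hlast)

end Bnl

end NTAlg

theorem slt_Bnl {n l : ℕ} (hl : l < n) : SLT (Bnl n l : Matrix (Fin n) (Fin n) F) := by
  intro i j hij
  simp only [Bnl, ite_eq_right_iff, and_imp]
  intro hi hj
  have : (i : ℕ) ≤ j := hij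
  omega

theorem stmt17_general {n : ℕ} (h2 : (2 : F) ≠ 0) :
    (∀ l m : ℕ, 1 ≤ l → l < m → m < n →
      ¬ NTIso (Bnl n l : Matrix (Fin n) (Fin n) F) (Bnl n m : Matrix (Fin n) (Fin n) F)) ∧
    ∃ Ts : Fin (n - 1) → Matrix (Fin n) (Fin n) F,
      (∀ i, SLT (Ts i)) ∧ Pairwise fun i j => ¬ NTIso (Ts i) (Ts j) := by
  have hnot (l m : ℕ) (hl : 1 ≤ l) (hlm : l < m) (hmn : m < n) :
      ¬ NTIso (Bnl n l : Matrix (Fin n) (Fin n) F) (Bnl n m) := by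
    obtain ⟨k, rfl⟩ : ∃ k, n = k + 1 := ⟨n - 1, by omega⟩
    exact NTAlg.not_ntIso_Bnl h2 hl hlm (by omega)
  refine ⟨hnot, fun i => Bnl n (i.val + 1), fun i => slt_Bnl (by omega), fun i j hij => ?_⟩
  rcases lt_or_gt_of_ne (Fin.val_ne_of_ne hij) with h | h
  · exact hnot _ _ (by omega) (by omega) (by omega)
  · exact fun hiso => hnot _ _ (by omega) (by omega) (by omega) (NTAlg.ntIso_symm hiso)

/-- The matrices `B_{n,1}, …, B_{n,n−1}` give pairwise non-isomorphic algebras; hence there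
are at least `n − 1` isomorphism classes of algebras `A(T)`. -/
theorem stmt17 {n : ℕ} (h2 : (2 : F) ≠ 0) (hn : 2 ≤ n) :
    (∀ l m : ℕ, 1 ≤ l → l < m → m < n →
      ¬ NTIso (Bnl n l : Matrix (Fin n) (Fin n) F) (Bnl n m : Matrix (Fin n) (Fin n) F)) ∧
    ∃ Ts : Fin (n - 1) → Matrix (Fin n) (Fin n) F,
      (∀ i, SLT (Ts i)) ∧ Pairwise fun i j => ¬ NTIso (Ts i) (Ts j) :=
  stmt17_general h2
end
end

section
/- Let F be a field of characteristic ≠ 2 and T, S strictly lower triangular n×n matrices over F that are equivalent by a finite sequence of elementary triangular operations (each of type P, F, or Q, applied where well-defined). Then A(T) ≅ A(S) as F-algebras via a degree-preserving isomorphism. -/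
open scoped BigOperators

noncomputable section

variable {F : Type} [Field F]

/-- Elementary triangular operation `P_{r₁}(·, α)`. -/
def ETOP {n : ℕ} (T S : Matrix (Fin n) (Fin n) F) : Prop :=
  ∃ (r₁ : Fin n) (α : F), α ≠ 0 ∧
    ∀ r k : Fin n, S r k =
      if r = r₁ then T r k / α else if k = r₁ then α * T r k else T r k

/-- Elementary triangular operation `F_{(r₁,r₂)}` (with its well-definedness restrictions). -/
def ETOF {n : ℕ} (T S : Matrix (Fin n) (Fin n) F) : Prop :=
  ∃ r₁ r₂ : Fin n, r₁ < r₂ ∧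
    (∀ j : Fin n, r₁ ≤ j → T r₂ j = 0) ∧
    (∀ r : Fin n, r₁ < r → r < r₂ → T r r₁ = 0) ∧
    ∀ r k : Fin n, S r k = T (Equiv.swap r₁ r₂ r) (Equiv.swap r₁ r₂ k)

/-- Elementary triangular operation `Q_{(r₀,k₀)}(·, β)` (with its well-definedness restrictions). -/
def ETOQ {n : ℕ} (T S : Matrix (Fin n) (Fin n) F) : Prop :=
  ∃ (k₀ r₀ : Fin n) (β : F), k₀ < r₀ ∧
    (∀ j : Fin n, k₀ < j → T r₀ j = 0) ∧
    (k₀.val = 0 ∨ (0 < k₀.val ∧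
      ∀ i : Fin n, i < k₀ → T r₀ i + T r₀ k₀ * T k₀ i = β * T k₀ i)) ∧
    ∀ r k : Fin n, S r k =
      if r = r₀ ∧ k = k₀ then T r₀ k₀ - 2 * β
      else if r₀ < r ∧ k = k₀ then T r k₀ + β * T r r₀
      else T r k

/-! Every elementary triangular operation is realised by an invertible linear change of
variables `X ↦ Γ X`: a diagonal matrix for `P`, the permutation matrix of the swap for `F`, and
the transvection `1 + β E_{k₀ r₀}` for `Q`. For strictly lower triangular `T` the defining
relations of `A(T)` are `X_i (X_i - ∑_j t_ij X_j)`, and the substitution carries them onto a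
generating set of the relation ideal of `S`; for `Q`, thanks to the condition
`t_{r₀i} + t_{r₀k₀} t_{k₀i} = β t_{k₀i}`, the image of the relation at `r₀` is that of `S` plus
`β (β - t_{r₀k₀})` times the relation at `k₀`. The substitution therefore descends to a graded
isomorphism `A(T) ≅ A(S)`. The restrictions on `F` and `Q` also keep `S` strictly lower
triangular, so these isomorphisms compose along the chain of operations. -/

namespace NilTriangular

open MvPolynomial Matrix

variable {n : ℕ}

abbrev linForm : (Fin n → F) →ₗ[F] MvPolynomial (Fin n) F :=
  Fintype.linearCombination F X

lemma linForm_single (i : Fin n) : linForm (Pi.single i (1 : F)) = X i := by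
  simp [Fintype.linearCombination_apply_single]

def rel (T : Matrix (Fin n) (Fin n) F) (i : Fin n) : MvPolynomial (Fin n) F :=
  X i * (X i - linForm (T i))

lemma ntIdeal_eq_span_rel {T : Matrix (Fin n) (Fin n) F} (hT : SLT T) :
    ntIdeal T = Ideal.span (Set.range (rel T)) := by
  have hrel : ∀ i, X i ^ 2 - ∑ j ∈ Finset.univ.filter (· < i), C (T i j) * X j * X i = rel T i := by
    intro i
    rw [Finset.sum_filter_of_ne fun j _ hj => lt_of_not_ge fun hij => hj (by simp [hT i j hij]),
      rel, Fintype.linearCombination_apply, mul_sub, ← sq, Finset.mul_sum]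
    exact congrArg _ (Finset.sum_congr rfl fun j _ => by rw [smul_eq_C_mul]; ring)
  simp only [ntIdeal, hrel, Set.range, eq_comm]

def linSubst (Γ : Matrix (Fin n) (Fin n) F) : MvPolynomial (Fin n) F →ₐ[F] MvPolynomial (Fin n) F :=
  aeval fun j => linForm (Γ *ᵥ Pi.single j 1)

lemma linSubst_linForm (Γ : Matrix (Fin n) (Fin n) F) (v : Fin n → F) :
    linSubst Γ (linForm v) = linForm (Γ *ᵥ v) := by
  conv_rhs => rw [← Finset.univ_sum_single v]
  simp [linSubst, Fintype.linearCombination_apply, smul_eq_C_mul, Matrix.mulVec_sum]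

lemma linSubst_X (Γ : Matrix (Fin n) (Fin n) F) (i : Fin n) :
    linSubst Γ (X i) = linForm (Γ *ᵥ Pi.single i 1) :=
  aeval_X _ _

lemma linSubst_comp (Γ Γ' : Matrix (Fin n) (Fin n) F) :
    (linSubst Γ).comp (linSubst Γ') = linSubst (Γ * Γ') :=
  algHom_ext fun i => by
    rw [AlgHom.comp_apply, linSubst_X, linSubst_X, linSubst_linForm, Matrix.mulVec_mulVec]

lemma linSubst_one : linSubst (1 : Matrix (Fin n) (Fin n) F) = AlgHom.id F _ :=
  algHom_ext fun i => by rw [linSubst_X, Matrix.one_mulVec, linForm_single, AlgHom.id_apply]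

def linSubstEquiv {Γ Γ' : Matrix (Fin n) (Fin n) F} (h : Γ * Γ' = 1) :
    MvPolynomial (Fin n) F ≃ₐ[F] MvPolynomial (Fin n) F :=
  AlgEquiv.ofAlgHom (linSubst Γ) (linSubst Γ') (by rw [linSubst_comp, h, linSubst_one])
    (by rw [linSubst_comp, mul_eq_one_comm.1 h, linSubst_one])

lemma linSubst_rel (Γ T : Matrix (Fin n) (Fin n) F) (i : Fin n) :
    linSubst Γ (rel T i) =
      linForm (Γ *ᵥ Pi.single i 1) * (linForm (Γ *ᵥ Pi.single i 1) - linForm (Γ *ᵥ T i)) := by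
  rw [rel, map_mul, map_sub, linSubst_X, linSubst_linForm]

lemma ntIso_of_map_eq {T S Γ Γ' : Matrix (Fin n) (Fin n) F} (h : Γ * Γ' = 1)
    (hmap : Ideal.map (linSubst Γ) (ntIdeal T) = ntIdeal S) : NTIso T S := by
  refine ⟨Ideal.quotientEquivAlg _ _ (linSubstEquiv h) hmap.symm, Γ, fun j => ?_⟩
  change Ideal.Quotient.mkₐ F _ (linSubst Γ (X j)) = _
  simp [linSubst_X, Fintype.linearCombination_apply, ntGen]

lemma map_linSubst_ntIdeal (Γ : Matrix (Fin n) (Fin n) F) {T : Matrix (Fin n) (Fin n) F}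
    (hT : SLT T) :
    Ideal.map (linSubst Γ) (ntIdeal T) = Ideal.span (Set.range fun i => linSubst Γ (rel T i)) := by
  rw [ntIdeal_eq_span_rel hT, Ideal.map_span, ← Set.range_comp]
  rfl

lemma ntIso_of_rel_mem {T S Γ Γ' : Matrix (Fin n) (Fin n) F} (h : Γ * Γ' = 1)
    (hT : SLT T) (hS : SLT S)
    (hTS : ∀ i, linSubst Γ (rel T i) ∈ Ideal.span (Set.range (rel S)))
    (hST : ∀ i, rel S i ∈ Ideal.span (Set.range fun j => linSubst Γ (rel T j))) :
    NTIso T S := by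
  refine ntIso_of_map_eq h ?_
  rw [map_linSubst_ntIdeal Γ hT, ntIdeal_eq_span_rel hS]
  exact le_antisymm (Ideal.span_le.2 <| Set.range_subset_iff.2 hTS)
    (Ideal.span_le.2 <| Set.range_subset_iff.2 hST)

lemma linSubst_diagonal_rel {T S : Matrix (Fin n) (Fin n) F} {c : Fin n → F}
    (hTS : ∀ i k, c k * T i k = c i * S i k) (i : Fin n) :
    linSubst (diagonal c) (rel T i) = C (c i ^ 2) * rel S i := by
  have hrow : diagonal c *ᵥ T i = c i • S i := funext fun k => by simp [mulVec_diagonal, hTS]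
  rw [linSubst_rel, diagonal_mulVec_single, mul_one, Fintype.linearCombination_apply_single, hrow,
    map_smul, rel]
  simp only [smul_eq_C_mul, map_pow]
  ring

lemma ntIso_of_diagonal {T S : Matrix (Fin n) (Fin n) F} (c : Fin n → F) (hc : ∀ i, c i ≠ 0)
    (hT : SLT T) (hS : SLT S) (hTS : ∀ i k, c k * T i k = c i * S i k) : NTIso T S := by
  refine ntIso_of_rel_mem (Γ := diagonal c) (Γ' := diagonal c⁻¹) ?_ hT hS (fun i => ?_)
    (fun i => ?_)
  · rw [diagonal_mul_diagonal, ← diagonal_one]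
    exact congrArg diagonal (funext fun i => mul_inv_cancel₀ (hc i))
  · rw [linSubst_diagonal_rel hTS]
    exact Ideal.mul_mem_left _ _ (Ideal.subset_span ⟨i, rfl⟩)
  · have : rel S i = C ((c i)⁻¹ ^ 2) * linSubst (diagonal c) (rel T i) := by
      rw [linSubst_diagonal_rel hTS, ← mul_assoc, ← map_mul, ← mul_pow, inv_mul_cancel₀ (hc i),
        one_pow, map_one, one_mul]
    rw [this]
    exact Ideal.mul_mem_left _ _ (Ideal.subset_span ⟨i, rfl⟩)

lemma linSubst_perm_rel (σ : Equiv.Perm (Fin n)) (T : Matrix (Fin n) (Fin n) F) (i : Fin n) :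
    linSubst σ.toPEquiv.toMatrix (rel T i) = rel (T.submatrix σ σ) (σ.symm i) := by
  have hrow : T i ∘ σ = T.submatrix σ σ (σ.symm i) := funext fun k => by simp
  rw [linSubst_rel, PEquiv.toMatrix_toPEquiv_mulVec, PEquiv.toMatrix_toPEquiv_mulVec, hrow,
    Pi.single_comp_equiv, linForm_single, rel]

lemma ntIso_submatrix {T : Matrix (Fin n) (Fin n) F} (σ : Equiv.Perm (Fin n)) (hT : SLT T)
    (hS : SLT (T.submatrix σ σ)) : NTIso T (T.submatrix σ σ) := by
  refine ntIso_of_rel_mem (Γ := σ.toPEquiv.toMatrix) (Γ' := σ.symm.toPEquiv.toMatrix) ?_ hT hS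
    (fun i => ?_) (fun i => ?_)
  · rw [← PEquiv.toMatrix_trans, ← Equiv.toPEquiv_trans, Equiv.self_trans_symm,
      Equiv.toPEquiv_refl, PEquiv.toMatrix_refl]
  · rw [linSubst_perm_rel]
    exact Ideal.subset_span ⟨_, rfl⟩
  · exact Ideal.subset_span ⟨σ i, (linSubst_perm_rel σ T (σ i)).trans (by rw [σ.symm_apply_apply])⟩

lemma transvection_mulVec (i j : Fin n) (c : F) (v : Fin n → F) :
    transvection i j c *ᵥ v = v + Pi.single i (c * v j) := by
  rw [transvection, add_mulVec, one_mulVec, single_mulVec]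
  rfl

section Transvection

variable {T S : Matrix (Fin n) (Fin n) F} {k₀ r₀ : Fin n} {β : F}

lemma linSubst_transvection_rel_of_ne (hrow : ∀ i, i ≠ r₀ → S i = T i + Pi.single k₀ (β * T i r₀))
    {i : Fin n} (hi : i ≠ r₀) : linSubst (transvection k₀ r₀ β) (rel T i) = rel S i := by
  rw [linSubst_rel, transvection_mulVec, transvection_mulVec, ← hrow i hi,
    Pi.single_eq_of_ne hi.symm, mul_zero, Pi.single_zero, add_zero, linForm_single, rel]

lemma linSubst_transvection_rel_self (hk : k₀ < r₀) (hT : SLT T)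
    (hrow : ∀ i, i ≠ r₀ → S i = T i + Pi.single k₀ (β * T i r₀))
    (hr₀ : S r₀ = T r₀ - Pi.single k₀ (2 * β))
    (hcomb : T r₀ = (β - T r₀ k₀) • T k₀ + Pi.single k₀ (T r₀ k₀)) :
    linSubst (transvection k₀ r₀ β) (rel T r₀) =
      rel S r₀ + C (β * (β - T r₀ k₀)) * rel S k₀ := by
  have hSk : S k₀ = T k₀ := by
    rw [hrow k₀ hk.ne, hT k₀ r₀ hk.le, mul_zero, Pi.single_zero, add_zero]
  have hlin : linForm (T r₀) = C (β - T r₀ k₀) * linForm (T k₀) + C (T r₀ k₀) * X k₀ := by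
    conv_lhs => rw [hcomb]
    rw [map_add, map_smul, Fintype.linearCombination_apply_single, smul_eq_C_mul, smul_eq_C_mul]
  rw [linSubst_rel, transvection_mulVec, transvection_mulVec, hT r₀ r₀ le_rfl, mul_zero,
    Pi.single_zero, add_zero, Pi.single_eq_same, mul_one, rel, rel, hSk, hr₀, map_sub, hlin]
  simp only [map_add, Fintype.linearCombination_apply_single, smul_eq_C_mul,
    map_mul, map_sub, map_ofNat, one_smul]
  ring

lemma ntIso_of_transvection (hk : k₀ < r₀) (hT : SLT T) (hS : SLT S)
    (hrow : ∀ i, i ≠ r₀ → S i = T i + Pi.single k₀ (β * T i r₀))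
    (hr₀ : S r₀ = T r₀ - Pi.single k₀ (2 * β))
    (hcomb : T r₀ = (β - T r₀ k₀) • T k₀ + Pi.single k₀ (T r₀ k₀)) : NTIso T S := by
  have hself := linSubst_transvection_rel_self hk hT hrow hr₀ hcomb
  have hne : ∀ i, i ≠ r₀ → linSubst (transvection k₀ r₀ β) (rel T i) = rel S i :=
    fun _ hi => linSubst_transvection_rel_of_ne hrow hi
  refine ntIso_of_rel_mem (Γ := transvection k₀ r₀ β) (Γ' := transvection k₀ r₀ (-β)) ?_ hT hS
    (fun i => ?_) (fun i => ?_)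
  · rw [transvection_mul_transvection_same _ _ hk.ne, add_neg_cancel, transvection_zero]
  · obtain rfl | hi := eq_or_ne i r₀
    · rw [hself]
      exact Ideal.add_mem _ (Ideal.subset_span ⟨i, rfl⟩)
        (Ideal.mul_mem_left _ _ (Ideal.subset_span ⟨k₀, rfl⟩))
    · rw [hne i hi]
      exact Ideal.subset_span ⟨i, rfl⟩
  · obtain rfl | hi := eq_or_ne i r₀
    · rw [← add_sub_cancel_right (rel S i) (C (β * (β - T i k₀)) * rel S k₀), ← hself,
        ← hne k₀ hk.ne]
      exact Ideal.sub_mem _ (Ideal.subset_span ⟨i, rfl⟩)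
        (Ideal.mul_mem_left _ _ (Ideal.subset_span ⟨k₀, rfl⟩))
    · exact Ideal.subset_span ⟨i, hne i hi⟩

end Transvection

end NilTriangular

section

open NilTriangular

variable {n : ℕ}

lemma NTIso.refl (T : Matrix (Fin n) (Fin n) F) : NTIso T T :=
  ⟨AlgEquiv.refl, 1, fun j => by simp [Matrix.one_apply, ite_smul]⟩

lemma NTIso.trans {T U S : Matrix (Fin n) (Fin n) F} (h₁ : NTIso T U) (h₂ : NTIso U S) :
    NTIso T S := by
  obtain ⟨e₁, Γ₁, hΓ₁⟩ := h₁
  obtain ⟨e₂, Γ₂, hΓ₂⟩ := h₂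
  refine ⟨e₁.trans e₂, Γ₂ * Γ₁, fun j => ?_⟩
  simp only [AlgEquiv.trans_apply, hΓ₁, map_sum, map_smul, hΓ₂, Finset.smul_sum, smul_smul,
    Matrix.mul_apply, Finset.sum_smul]
  rw [Finset.sum_comm]
  exact Finset.sum_congr rfl fun k _ => Finset.sum_congr rfl fun i _ => by rw [mul_comm]

namespace ETOP

variable {T S : Matrix (Fin n) (Fin n) F}

lemma slt (hT : SLT T) (h : ETOP T S) : SLT S := by
  obtain ⟨r₁, α, -, hS⟩ := h
  intro i j hij
  rw [hS i j, hT i j hij]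
  split_ifs <;> simp

lemma ntIso (hT : SLT T) (h : ETOP T S) : NTIso T S := by
  have hS' := slt hT h
  obtain ⟨r₁, α, hα, hS⟩ := h
  refine ntIso_of_diagonal (Function.update 1 r₁ α) (fun i => ?_) hT hS' (fun i k => ?_)
  · rcases eq_or_ne i r₁ with rfl | hi <;> simp [*]
  · rw [hS i k]
    rcases eq_or_ne i r₁ with rfl | hi
    · rcases eq_or_ne k i with rfl | hk
      · simp [hT k k le_rfl]
      · simp [hk, mul_div_cancel₀ _ hα]
    · rcases eq_or_ne k r₁ with rfl | hk <;> simp [*]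

end ETOP

namespace ETOF

variable {T S : Matrix (Fin n) (Fin n) F}

lemma slt (hT : SLT T) (h : ETOF T S) : SLT S := by
  obtain ⟨r₁, r₂, h12, hrow, hcol, hS⟩ := h
  intro r k hrk
  rw [hS r k, Equiv.swap_apply_def, Equiv.swap_apply_def]
  -- the swap moves onto or above the diagonal only the entries `T r₂ j` with `r₁ ≤ j` and
  -- `T r r₁` with `r₁ < r < r₂`, which vanish by hypothesis
  split_ifs <;> subst_vars
  all_goals first
    | apply hT; order
    | apply hrow; order
    | exact (le_or_gt _ _).elim (hT _ _) fun h => hcol _ h (by order)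

lemma ntIso (hT : SLT T) (h : ETOF T S) : NTIso T S := by
  have hS := slt hT h
  obtain ⟨r₁, r₂, -, -, -, hsub⟩ := h
  obtain rfl : S = T.submatrix (Equiv.swap r₁ r₂) (Equiv.swap r₁ r₂) := Matrix.ext hsub
  exact ntIso_submatrix _ hT hS

end ETOF

namespace ETOQ

variable {T S : Matrix (Fin n) (Fin n) F}

lemma slt (hT : SLT T) (h : ETOQ T S) : SLT S := by
  obtain ⟨k₀, r₀, β, hk, -, -, hS⟩ := h
  intro r k hrk
  rw [hS r k, if_neg (by rintro ⟨rfl, rfl⟩; order), if_neg (by rintro ⟨h, rfl⟩; order)]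
  exact hT r k hrk

lemma ntIso (hT : SLT T) (h : ETOQ T S) : NTIso T S := by
  have hS := slt hT h
  obtain ⟨k₀, r₀, β, hk, hrow, hcond, hSdef⟩ := h
  refine ntIso_of_transvection (β := β) hk hT hS (fun i hi => funext fun k => ?_)
    (funext fun k => ?_) (funext fun j => ?_)
  · rw [hSdef, if_neg (fun h => hi h.1), Pi.add_apply]
    rcases eq_or_ne k k₀ with rfl | hk'
    · rw [Pi.single_eq_same]
      rcases lt_or_gt_of_ne hi with hlt | hgt
      · rw [if_neg (fun h => (h.1.trans hlt).false), hT i r₀ hlt.le, mul_zero, add_zero]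
      · rw [if_pos ⟨hgt, rfl⟩]
    · rw [if_neg (fun h => hk' h.2), Pi.single_eq_of_ne hk', add_zero]
  · rw [hSdef, Pi.sub_apply]
    rcases eq_or_ne k k₀ with rfl | hk'
    · rw [if_pos ⟨rfl, rfl⟩, Pi.single_eq_same]
    · rw [if_neg (fun h => hk' h.2), if_neg (fun h => hk' h.2), Pi.single_eq_of_ne hk', sub_zero]
  · rw [Pi.add_apply, Pi.smul_apply, smul_eq_mul]
    rcases lt_trichotomy j k₀ with hj | rfl | hj
    · obtain ⟨-, hc⟩ := hcond.resolve_left (Nat.ne_zero_of_lt hj)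
      rw [Pi.single_eq_of_ne hj.ne, add_zero]
      linear_combination hc j hj
    · rw [hT j j le_rfl, Pi.single_eq_same]; ring
    · rw [hrow j hj, hT k₀ j hj.le, Pi.single_eq_of_ne hj.ne', mul_zero, add_zero]

end ETOQ

end

theorem stmt18_general {n : ℕ} (T S : Matrix (Fin n) (Fin n) F)
    (hT : SLT T)
    (h : Relation.ReflTransGen (fun A B : Matrix (Fin n) (Fin n) F =>
      ETOP A B ∨ ETOF A B ∨ ETOQ A B) T S) :
    NTIso T S := by
  suffices SLT S ∧ NTIso T S from this.2
  induction h with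
  | refl => exact ⟨hT, .refl T⟩
  | tail _ hstep ih =>
    obtain ⟨hU, hTU⟩ := ih
    rcases hstep with h | h | h <;> exact ⟨h.slt hU, hTU.trans (h.ntIso hU)⟩

/-- If `T` and `S` are equivalent by a finite sequence of elementary triangular operations,
then `A(T) ≅ A(S)` via a degree-preserving isomorphism. -/
theorem stmt18 {n : ℕ} (h2 : (2 : F) ≠ 0) (T S : Matrix (Fin n) (Fin n) F)
    (hT : SLT T) (hS : SLT S)
    (h : Relation.ReflTransGen (fun A B : Matrix (Fin n) (Fin n) F =>
      ETOP A B ∨ ETOF A B ∨ ETOQ A B) T S) :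
    NTIso T S :=
  stmt18_general T S hT h
end
end

section
/- Let F be a field of characteristic ≠ 2 and U an n×n strictly lower triangular matrix over F such that A(U) ≅ A(0_n) via a degree-preserving isomorphism. Then U can be transformed into the zero matrix 0_n by a finite sequence of well-defined elementary triangular operations of type Q; that is, U ≈ 0_n under ETO-equivalence. -/
open scoped BigOperators

noncomputable section

variable {F : Type} [Field F]

/-!
A degree-preserving isomorphism `A(U) ≃ A(0)` sends each generator `Y i` to a linear form
`ℓ i = ∑ t, Γ t i • Z t` of `A(0)`; the coefficient vectors are linearly independent and
`ℓ i ^ 2 = (∑ j, U i j • ℓ j) * ℓ i`. Comparing coefficients of `Z r * Z s` turns this into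
scalar relations on the coefficient vectors. The operation `Q_{(r₀,k₀)}(·, β)` transports such a
family, replacing `ℓ r₀` by `ℓ r₀ - β • ℓ k₀`. If the rows of `U` above `i₀` vanish, the relations
force the forms `ℓ j` with `j < i₀` to be multiples of distinct variables, and then, since `ℓ i₀`
is not a combination of them, row `i₀` has at most one nonzero entry `U i₀ k`. The operation
`Q_{(i₀,k)}(·, U i₀ k / 2)` clears it without touching the earlier rows, and induction on the
number of leading zero rows reaches `0`.
-/

section

open MvPolynomial TrivSqZeroExt
open scoped Matrix

variable {n : ℕ}

theorem Fintype.linearCombination_update_add {R M ι : Type*} [Semiring R] [AddCommMonoid M]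
    [Module R M] [Fintype ι] [DecidableEq ι] (v : ι → M) (i : ι) (w : M) (a : ι → R) :
    Fintype.linearCombination R (Function.update v i (v i + w)) a =
      Fintype.linearCombination R v a + a i • w := by
  have hv : Function.update v i (v i + w) = v + Pi.single i w := by
    funext j
    by_cases h : j = i <;> simp [h]
  simp [hv, Fintype.linearCombination_apply, smul_add, Finset.sum_add_distrib, Pi.single_apply]

theorem Fintype.apply_linearCombination {R M N ι : Type*} [Semiring R] [AddCommMonoid M]
    [Module R M] [AddCommMonoid N] [Module R N] [Fintype ι] (f : M →ₗ[R] N) (v : ι → M)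
    (a : ι → R) : f (Fintype.linearCombination R v a) = Fintype.linearCombination R (f ∘ v) a := by
  simp [Fintype.linearCombination_apply]

/-- The defining relations of `A(U)`, summed over the whole row: for strictly lower triangular `U`
this agrees with `ntIdeal`, and it makes the relations linear in `U i`. -/
def SatisfiesRelations {R : Type*} [CommRing R] [Algebra F R] (U : Matrix (Fin n) (Fin n) F)
    (y : Fin n → R) : Prop :=
  ∀ i, y i ^ 2 = Fintype.linearCombination F y (U i) * y i

theorem SatisfiesRelations.map {R S : Type*} [CommRing R] [Algebra F R] [CommRing S] [Algebra F S]
    {U : Matrix (Fin n) (Fin n) F} {y : Fin n → R} (hy : SatisfiesRelations U y) (f : R →ₐ[F] S) :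
    SatisfiesRelations U (f ∘ y) := by
  intro i
  simp only [Function.comp_apply, Fintype.linearCombination_apply, ← map_pow, hy i, map_mul,
    map_sum, map_smul]

theorem SLT.etoQ {U U' : Matrix (Fin n) (Fin n) F} (hU : SLT U) (hQ : ETOQ U U') : SLT U' := by
  obtain ⟨k, r, β, hkr, -, -, hU'⟩ := hQ
  intro a b hab
  rw [hU']
  split_ifs with h₁ h₂
  · exact absurd (h₁.1 ▸ h₁.2 ▸ hab) (not_le.mpr hkr)
  · rw [hU a k (h₂.2 ▸ hab), hU a r ((h₂.2 ▸ hab).trans hkr.le), mul_zero, add_zero]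
  · exact hU a b hab

theorem SatisfiesRelations.etoQ {R : Type*} [CommRing R] [Algebra F R]
    {U U' : Matrix (Fin n) (Fin n) F} {y : Fin n → R} (hU : SLT U) (hy : SatisfiesRelations U y)
    {k r : Fin n} {β : F} (hkr : k < r) (hrow : ∀ j, k < j → U r j = 0)
    (hwd : ∀ i, i < k → U r i + U r k * U k i = β * U k i)
    (hU' : ∀ a b, U' a b =
      if a = r ∧ b = k then U r k - 2 * β
      else if r < a ∧ b = k then U a k + β * U a r
      else U a b) :
    SatisfiesRelations U' (Function.update y r (y r + (-β) • y k)) := by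
  set L := Fintype.linearCombination F y
  have hL : ∀ a, Fintype.linearCombination F (Function.update y r (y r + (-β) • y k)) a =
      L a + a r • (-β) • y k := Fintype.linearCombination_update_add y r _
  have hrk : r ≠ k := hkr.ne'
  intro i
  rcases lt_trichotomy i r with hir | rfl | hri
  · have hrowi : U' i = U i := by
      funext b
      simp [hU', hir.ne, hir.not_gt]
    rw [hrowi, hL, hU i r hir.le, Function.update_of_ne hir.ne, zero_smul, add_zero]
    exact hy i
  · have hrow_r : U i = (β - U i k) • U k + Pi.single k (U i k) := by
      funext j
      rcases lt_trichotomy j k with hjk | rfl | hkj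
      · simp [hjk.ne]; linear_combination hwd j hjk
      · simp [hU j j le_rfl]
      · simp [hkj.ne', hrow j hkj, hU k j hkj.le]
    have hrowi : U' i = U i - Pi.single k (2 * β) := by
      funext b
      by_cases hb : b = k
      · subst hb; simp [hU']
      · simp [hU', hb]
    have hLr : L (U i) = (β - U i k) • L (U k) + U i k • y k := by
      rw [congrArg L hrow_r, map_add, map_smul, Fintype.linearCombination_apply_single]
    rw [hrowi, hL, map_sub, Fintype.linearCombination_apply_single, hLr, Function.update_self,
      Pi.sub_apply, hU i i le_rfl]
    have hi := hy i
    have hk := hy k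
    rw [hLr] at hi
    simp only [Algebra.smul_def, map_sub, map_neg, map_mul, map_ofNat, Pi.single_apply, hrk,
      if_false, map_zero] at hi hk ⊢
    linear_combination hi + (algebraMap F R β * algebraMap F R (U i k) - algebraMap F R β ^ 2) * hk
  · have hrowi : U' i = U i + Pi.single k (β * U i r) := by
      funext b
      by_cases hb : b = k
      · subst hb; simp [hU', hri, hri.ne']
      · simp [hU', hb]
    have hU'ir : (U i + Pi.single k (β * U i r) : Fin n → F) r = U i r := by simp [hrk]
    rw [hrowi, hL, hU'ir, map_add, Fintype.linearCombination_apply_single,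
      Function.update_of_ne hri.ne', smul_smul, add_assoc, ← add_smul, mul_neg, mul_comm (U i r), add_neg_cancel, zero_smul,
      add_zero]
    exact hy i

theorem SLT.sum_filter_lt_smul {M : Type*} [AddCommMonoid M] [Module F M]
    {U : Matrix (Fin n) (Fin n) F} (hU : SLT U) (i : Fin n) (y : Fin n → M) :
    ∑ j ∈ Finset.univ.filter (· < i), U i j • y j = Fintype.linearCombination F y (U i) := by
  rw [Fintype.linearCombination_apply, Finset.sum_filter_of_ne]
  intro j _ h
  by_contra hji
  exact h (by rw [hU i j (not_lt.mp hji), zero_smul])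

theorem aeval_mem_ntIdeal_eq_zero {R : Type*} [CommRing R] [Algebra F R]
    {U : Matrix (Fin n) (Fin n) F} (hU : SLT U) {y : Fin n → R} (hy : SatisfiesRelations U y) :
    ∀ p ∈ ntIdeal U, aeval y p = 0 := by
  suffices ntIdeal U ≤ RingHom.ker (aeval y) from fun p hp => this hp
  rw [ntIdeal, Ideal.span_le]
  rintro _ ⟨i, rfl⟩
  simp only [SetLike.mem_coe, RingHom.mem_ker, map_sub, map_pow, map_sum, map_mul, aeval_X,
    aeval_C, ← Finset.sum_mul, ← Algebra.smul_def, hU.sum_filter_lt_smul, hy i, sub_self]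

def ntLift {R : Type*} [CommRing R] [Algebra F R] {U : Matrix (Fin n) (Fin n) F} (hU : SLT U)
    (y : Fin n → R) (hy : SatisfiesRelations U y) : NTAlg U →ₐ[F] R :=
  Ideal.Quotient.liftₐ _ (aeval y) (aeval_mem_ntIdeal_eq_zero hU hy)

@[simp]
theorem ntLift_ntGen {R : Type*} [CommRing R] [Algebra F R] {U : Matrix (Fin n) (Fin n) F}
    (hU : SLT U) (y : Fin n → R) (hy : SatisfiesRelations U y) (i : Fin n) :
    ntLift hU y hy (ntGen U i) = y i := by
  rw [ntLift, ntGen, Ideal.Quotient.liftₐ_apply]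
  exact aeval_X y i

theorem satisfiesRelations_ntGen {U : Matrix (Fin n) (Fin n) F} (hU : SLT U) :
    SatisfiesRelations U (ntGen U) := by
  intro i
  have hrel : Ideal.Quotient.mk (ntIdeal U) (X i ^ 2 - ∑ j ∈ Finset.univ.filter (· < i),
      C (U i j) * X j * X i) = 0 :=
    Ideal.Quotient.eq_zero_iff_mem.mpr (Ideal.subset_span ⟨i, rfl⟩)
  have hC : ∀ c, algebraMap F (NTAlg U) c = Ideal.Quotient.mk (ntIdeal U) (C c) := fun _ => rfl
  rw [← hU.sum_filter_lt_smul]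
  simpa [ntGen, Algebra.smul_def, Finset.sum_mul, sub_eq_zero, hC] using hrel

theorem linearIndependent_ntGen {U : Matrix (Fin n) (Fin n) F} (hU : SLT U) :
    LinearIndependent F (ntGen U) := by
  let y : Fin n → TrivSqZeroExt F (Fin n → F) := fun i => inr (Pi.single i 1)
  have hy : SatisfiesRelations U y := fun i => by
    simp [y, Fintype.linearCombination_apply, pow_two, Finset.sum_mul]
  refine LinearIndependent.of_comp (ntLift hU y hy).toLinearMap ?_
  have : (ntLift hU y hy).toLinearMap ∘ ntGen U = inrHom F (Fin n → F) ∘ Pi.basisFun F (Fin n) := by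
    funext i; simp [y]
  rw [this]
  exact (Pi.basisFun F (Fin n)).linearIndependent.map' _ (LinearMap.ker_eq_bot.mpr inr_injective)

abbrev ntLin : (Fin n → F) →ₗ[F] NTAlg (0 : Matrix (Fin n) (Fin n) F) :=
  Fintype.linearCombination F (ntGen 0)

theorem SLT.zero : SLT (0 : Matrix (Fin n) (Fin n) F) := fun _ _ _ => rfl

theorem mul_add_mul_eq_of_ntLin_mul_eq {r s : Fin n} (hrs : r ≠ s) {a b c d : Fin n → F}
    (h : ntLin a * ntLin b = ntLin c * ntLin d) :
    a r * b s + a s * b r = c r * d s + c s * d r := by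
  -- evaluate at `Z r ↦ ε₁ = inl (inr 1)`, `Z s ↦ ε₂ = inr 1` and `Z t ↦ 0` otherwise, where
  -- `ε₁² = ε₂² = 0`, and read off the coefficient `snd.snd` of `ε₁ ε₂`
  let z : Fin n → TrivSqZeroExt (TrivSqZeroExt F F) (TrivSqZeroExt F F) :=
    Pi.single r (inl (inr 1)) + Pi.single s (inr 1)
  have hz : SatisfiesRelations (0 : Matrix (Fin n) (Fin n) F) z := fun t => by
    change z t ^ 2 = Fintype.linearCombination F z 0 * z t
    rw [map_zero, zero_mul]
    by_cases htr : t = r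
    · subst htr; simp [z, hrs, pow_two, ← inl_mul]
    · by_cases hts : t = s
      · subst hts; simp [z, htr, pow_two]
      · simp [z, htr, hts]
  have hψ : ∀ x, ntLift SLT.zero z hz (ntLin x) = x r • inl (inr 1) + x s • inr 1 := fun x => by
    simp [Fintype.linearCombination_apply, z, smul_add, Finset.sum_add_distrib, Pi.single_apply]
  have := congrArg (fun x => (ntLift SLT.zero z hz x).snd.snd) h
  simp [hψ] at this
  linear_combination this

theorem SatisfiesRelations.two_mul_mul_eq {U : Matrix (Fin n) (Fin n) F} {v : Fin n → Fin n → F}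
    (hy : SatisfiesRelations U (ntLin ∘ v)) (i : Fin n) {r s : Fin n} (hrs : r ≠ s) :
    2 * v i r * v i s = Fintype.linearCombination F v (U i) r * v i s +
      Fintype.linearCombination F v (U i) s * v i r := by
  have h : ntLin (v i) * ntLin (v i) =
      ntLin (Fintype.linearCombination F v (U i)) * ntLin (v i) := by
    rw [← pow_two, Fintype.apply_linearCombination]
    exact hy i
  linear_combination mul_add_mul_eq_of_ntLin_mul_eq hrs h

/-- A degree-preserving embedding `A(U) → A(0)`, recorded by the coefficient vectors `v i` of the
images of the generators. -/
def HasLinearModel (U : Matrix (Fin n) (Fin n) F) : Prop :=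
  ∃ v : Fin n → Fin n → F, LinearIndependent F v ∧ SatisfiesRelations U (ntLin ∘ v)

theorem NTIso.hasLinearModel {U : Matrix (Fin n) (Fin n) F} (hU : SLT U)
    (hiso : NTIso U (0 : Matrix (Fin n) (Fin n) F)) : HasLinearModel U := by
  obtain ⟨e, Γ, hΓ⟩ := hiso
  have he : e ∘ ntGen U = ntLin ∘ Γᵀ := by
    funext j
    change e (ntGen U j) = ntLin (Γᵀ j)
    rw [hΓ j, Fintype.linearCombination_apply]
    rfl
  refine ⟨Γᵀ, ?_, he ▸ (satisfiesRelations_ntGen hU).map e.toAlgHom⟩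
  refine LinearIndependent.of_comp ntLin ?_
  rw [← he]
  exact (linearIndependent_ntGen hU).map' e.toLinearMap e.toLinearEquiv.ker

theorem HasLinearModel.etoQ {U U' : Matrix (Fin n) (Fin n) F} (hU : SLT U) (hM : HasLinearModel U)
    (hQ : ETOQ U U') : HasLinearModel U' := by
  obtain ⟨k, r, β, hkr, hrow, hwd, hU'⟩ := hQ
  obtain ⟨v, hv, hy⟩ := hM
  have hwd' : ∀ i, i < k → U r i + U r k * U k i = β * U k i := by
    rcases hwd with hk | ⟨-, hwd⟩
    · exact fun i hi => absurd hi (by simp [Fin.lt_def, hk])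
    · exact hwd
  refine ⟨Function.update v r (v r + (-β) • v k), ?_, ?_⟩
  · have : Function.update v r (v r + (-β) • v k) =
        v + ((Pi.single r (-β) : Fin n → F) · • v k) := by
      funext j
      by_cases hj : j = r
      · subst hj; simp
      · simp [hj]
    rw [this]
    exact (linearIndependent_add_smul_iff (by simp [hkr.ne])).mpr hv
  · have := hy.etoQ hU hkr hrow hwd' hU'
    rwa [Function.comp_update, map_add, map_smul]

theorem mul_eq_zero_of_two_mul_mul_eq {ι : Type*} (h2 : (2 : F) ≠ 0) {w d : ι → F}
    (hwd : ∀ r s, r ≠ s → 2 * w r * w s = d r * w s + d s * w r) {t : ι} (hwt : w t ≠ 0)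
    (hdt : d t = 0) : ∀ r s, r ≠ s → d r * d s = 0 := by
  have hd : ∀ r, r ≠ t → d r = 2 * w r := fun r hr =>
    mul_right_cancel₀ hwt (by linear_combination -(hwd r t hr) - w r * hdt)
  intro r s hrs
  by_cases hr : r = t
  · rw [hr, hdt, zero_mul]
  by_cases hs : s = t
  · rw [hs, hdt, mul_zero]
  have hrs' := hwd r s hrs
  rw [hd r hr, hd s hs] at hrs' ⊢
  have : 2 * (w r * w s) = 0 := by linear_combination -hrs'
  linear_combination 4 * (mul_eq_zero.mp this).resolve_left h2

section ZeroRows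

variable {U : Matrix (Fin n) (Fin n) F} {v : Fin n → Fin n → F}

theorem SatisfiesRelations.apply_eq_zero_of_row_eq_zero (h2 : (2 : F) ≠ 0)
    (hy : SatisfiesRelations U (ntLin ∘ v)) {j : Fin n} (hj : U j = 0) {t u : Fin n}
    (ht : v j t ≠ 0) (hu : u ≠ t) : v j u = 0 := by
  have := hy.two_mul_mul_eq j hu.symm
  simp only [hj, map_zero, Pi.zero_apply, zero_mul, add_zero, mul_assoc] at this
  exact (mul_eq_zero.mp ((mul_eq_zero.mp this).resolve_left h2)).resolve_left ht

theorem SatisfiesRelations.smul_eq_of_row_eq_zero (h2 : (2 : F) ≠ 0)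
    (hy : SatisfiesRelations U (ntLin ∘ v)) {j : Fin n} (hj : U j = 0) {t : Fin n}
    (ht : v j t ≠ 0) {x : Fin n → F} (hx : ∀ u, u ≠ t → x u = 0) : (x t / v j t) • v j = x := by
  funext u
  by_cases hu : u = t
  · subst hu; simp [div_mul_cancel₀ _ ht]
  · simp [hy.apply_eq_zero_of_row_eq_zero h2 hj ht hu, hx u hu]

theorem SatisfiesRelations.eq_of_row_eq_zero (h2 : (2 : F) ≠ 0) (hv : LinearIndependent F v)
    (hy : SatisfiesRelations U (ntLin ∘ v)) {j j' : Fin n} (hj : U j = 0) (hj' : U j' = 0)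
    {t : Fin n} (ht : v j t ≠ 0) (ht' : v j' t ≠ 0) : j = j' := by
  by_contra hjj'
  refine (linearIndepOn_pair_iff v hjj' (hv.ne_zero j)).mp (hv.linearIndepOn _) (v j' t / v j t) ?_
  exact hy.smul_eq_of_row_eq_zero h2 hj ht fun u hu => hy.apply_eq_zero_of_row_eq_zero h2 hj' ht' hu

theorem SatisfiesRelations.exists_apply_ne_zero (h2 : (2 : F) ≠ 0) (hv : LinearIndependent F v)
    (hy : SatisfiesRelations U (ntLin ∘ v)) {s : Set (Fin n)} (hs : ∀ j ∈ s, U j = 0)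
    {i : Fin n} (hi : i ∉ s) : ∃ t, v i t ≠ 0 ∧ ∀ j ∈ s, v j t = 0 := by
  by_contra! h
  apply hv.notMem_span_image hi
  rw [← Finset.univ_sum_single (v i)]
  refine Submodule.sum_mem _ fun t _ => ?_
  by_cases ht : v i t = 0
  · rw [ht, Pi.single_zero]
    exact zero_mem _
  obtain ⟨j, hj, hjt⟩ := h t ht
  rw [← hy.smul_eq_of_row_eq_zero h2 (hs j hj) hjt (x := Pi.single t (v i t))
    fun u hu => Pi.single_eq_of_ne hu _, Pi.single_eq_same]
  exact Submodule.smul_mem _ _ (Submodule.subset_span ⟨j, hj, rfl⟩)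

theorem SatisfiesRelations.eq_of_apply_ne_zero (h2 : (2 : F) ≠ 0) (hU : SLT U)
    (hv : LinearIndependent F v) (hy : SatisfiesRelations U (ntLin ∘ v)) {i₀ : Fin n}
    (hzero : ∀ j < i₀, U j = 0) {l l' : Fin n} (hl : U i₀ l ≠ 0) (hl' : U i₀ l' ≠ 0) :
    l = l' := by
  have hlt : ∀ {m}, U i₀ m ≠ 0 → m < i₀ := fun hm => not_le.mp fun h => hm (hU _ _ h)
  set d := Fintype.linearCombination F v (U i₀)
  have hd_single : ∀ j, U i₀ j ≠ 0 → ∀ t, v j t ≠ 0 → d t = U i₀ j * v j t := by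
    intro j hj t ht
    simp only [d, Fintype.linearCombination_apply, Finset.sum_apply, Pi.smul_apply, smul_eq_mul]
    refine Finset.sum_eq_single j (fun m _ hmj => ?_) (by simp)
    by_cases hm : U i₀ m = 0
    · rw [hm, zero_mul]
    · have : v m t = 0 := by
        by_contra hmt
        exact hmj (hy.eq_of_row_eq_zero h2 hv (hzero m (hlt hm)) (hzero j (hlt hj)) hmt ht)
      rw [this, mul_zero]
  obtain ⟨t, hwt, hvt⟩ := hy.exists_apply_ne_zero h2 hv (s := {j | j < i₀}) hzero (lt_irrefl i₀)
  have hdt : d t = 0 := by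
    simp only [d, Fintype.linearCombination_apply, Finset.sum_apply, Pi.smul_apply, smul_eq_mul]
    refine Finset.sum_eq_zero fun m _ => ?_
    by_cases hm : m < i₀
    · rw [hvt m hm, mul_zero]
    · rw [hU i₀ m (not_lt.mp hm), zero_mul]
  have hd : ∀ r s, r ≠ s → d r * d s = 0 :=
    mul_eq_zero_of_two_mul_mul_eq h2 (fun _ _ hrs => hy.two_mul_mul_eq i₀ hrs) hwt hdt
  by_contra hll
  obtain ⟨a, ha⟩ := Function.ne_iff.mp (hv.ne_zero l)
  obtain ⟨b, hb⟩ := Function.ne_iff.mp (hv.ne_zero l')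
  have hab : a ≠ b := by
    rintro rfl
    exact hll (hy.eq_of_row_eq_zero h2 hv (hzero l (hlt hl)) (hzero l' (hlt hl')) ha hb)
  have := hd a b hab
  rw [hd_single l hl a ha, hd_single l' hl' b hb] at this
  exact mul_ne_zero (mul_ne_zero hl ha) (mul_ne_zero hl' hb) this

end ZeroRows

theorem HasLinearModel.exists_etoQ_rows_le_eq_zero (h2 : (2 : F) ≠ 0)
    {U : Matrix (Fin n) (Fin n) F} (hU : SLT U) (hM : HasLinearModel U) {i₀ : Fin n}
    (hzero : ∀ j < i₀, U j = 0) (hrow : U i₀ ≠ 0) :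
    ∃ U', ETOQ U U' ∧ ∀ j ≤ i₀, U' j = 0 := by
  obtain ⟨v, hv, hy⟩ := hM
  obtain ⟨k, hk⟩ := Function.ne_iff.mp hrow
  have hki : k < i₀ := not_le.mp fun h => hk (hU _ _ h)
  have honly : ∀ l, l ≠ k → U i₀ l = 0 := fun l hl =>
    by_contra fun h => hl (hy.eq_of_apply_ne_zero h2 hU hv hzero h hk)
  set β := U i₀ k / 2
  refine ⟨fun a b =>
      if a = i₀ ∧ b = k then U i₀ k - 2 * β
      else if i₀ < a ∧ b = k then U a k + β * U a i₀
      else U a b,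
    ⟨k, i₀, β, hki, fun j hj => honly j hj.ne', ?_, fun _ _ => rfl⟩, ?_⟩
  · rcases Nat.eq_zero_or_pos k.val with h | h
    · exact Or.inl h
    · exact Or.inr ⟨h, fun i hi => by simp [honly i hi.ne, hzero k hki]⟩
  · intro j hj
    funext b
    rcases hj.lt_or_eq with hj | rfl
    · simp [hj.ne, hj.not_gt, hzero j hj]
    · by_cases hb : b = k
      · simp [hb, β, mul_div_cancel₀ _ h2]
      · simp [hb, honly b hb]

theorem HasLinearModel.reflTransGen_etoQ_zero (h2 : (2 : F) ≠ 0) {U : Matrix (Fin n) (Fin n) F}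
    (hU : SLT U) (hM : HasLinearModel U) {m : ℕ} (hm : m ≤ n)
    (hzero : ∀ j : Fin n, j.val < m → U j = 0) :
    Relation.ReflTransGen (fun A B : Matrix (Fin n) (Fin n) F => ETOQ A B) U 0 := by
  induction hm using Nat.decreasingInduction generalizing U with
  | self =>
    rw [show U = 0 from funext fun j => hzero j j.isLt]
  | of_succ m hm ih =>
    by_cases hrow : U ⟨m, hm⟩ = 0
    · refine ih hU hM fun j hj => ?_
      rcases Nat.lt_succ_iff_lt_or_eq.mp hj with hj | hj
      · exact hzero j hj
      · rwa [show j = ⟨m, hm⟩ from Fin.ext hj]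
    · obtain ⟨U', hQ, hzero'⟩ := hM.exists_etoQ_rows_le_eq_zero h2 hU (fun j hj => hzero j hj) hrow
      exact .head hQ (ih (hU.etoQ hQ) (hM.etoQ hU hQ) fun j hj => hzero' j (Nat.lt_succ_iff.mp hj))

end

/-- If `A(U) ≅ A(0ₙ)` via a degree-preserving isomorphism, then `U` can be transformed into
the zero matrix by a finite sequence of well-defined elementary operations of type `Q`. -/
theorem stmt19 {n : ℕ} (h2 : (2 : F) ≠ 0) (U : Matrix (Fin n) (Fin n) F) (hU : SLT U)
    (hiso : NTIso U (0 : Matrix (Fin n) (Fin n) F)) :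
    Relation.ReflTransGen (fun A B : Matrix (Fin n) (Fin n) F => ETOQ A B)
      U (0 : Matrix (Fin n) (Fin n) F) :=
  (hiso.hasLinearModel hU).reflTransGen_etoQ_zero h2 hU n.zero_le fun _ hj =>
    absurd hj (Nat.not_lt_zero _)
end
end
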